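/- Assume the Common Givens: P_i is a preference order on C consistent with Q; the query is the pair (c_j,c_k) with P_i(c_j,c_k); and neither (c_j,c_k) nor (c_k,c_j) belongs to Q. Let P' ∈ μ(P_i). (1) If c is a candidate with P'(c,c_k) and (c,c_k) ∉ Q, then [∞, P', c] = [∞, P_i, c] \ [c_j, Q, −∞], where [∞, P, c] is c together with all candidates above c in P, and [c_j, Q, −∞] is c_j together with all candidates c' with (c_j,c') ∈ Q. (2) Symmetrically, if c is a candidate with P'(c_j,c) and (c_j,c) ∉ Q, then [c, P', −∞] = [c, P_i, −∞] \ [∞, Q, c_k], where [c, P, −∞] is c together with all candidates below c in P, and [∞, Q, c_k] is c_k together with all candidates c' with (c',c_k) ∈ Q. -/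

import Mathlib

/-- A preference order: a strict total order on candidates. -/
def IsPref {C : Type*} (P : C → C → Prop) : Prop :=
  (∀ a b : C, a ≠ b → P a b ∨ P b a) ∧ (∀ a : C, ¬ P a a) ∧
    ∀ a b c : C, P a b → P b c → P a c

/-- The (closed) segment `[c, P, c']` of candidates between `c` and `c'`. -/
def seg {C : Type*} (P : C → C → Prop) (c c' : C) : Set C :=
  {d : C | (d = c ∨ P c d) ∧ (d = c' ∨ P d c')}

/-- `Q` is a strict partial order (consistent, transitively closed reported preferences). -/
def IsSPO {C : Type*} (Q : C → C → Prop) : Prop :=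
  (∀ a : C, ¬ Q a a) ∧ ∀ a b c : C, Q a b → Q b c → Q a c

/-- `P` is consistent with (extends) the reported preferences `Q`, written `P ⊨ Q`. -/
def Extends {C : Type*} (P Q : C → C → Prop) : Prop := ∀ a b : C, Q a b → P a b

/-- The swap distance between two preference orders: the number of (unordered) pairs of
candidates ordered differently, counted here as ordered pairs `(a, b)` with
`P a b` and `P' b a`. -/
noncomputable def dswap {C : Type*} [Fintype C] (P P' : C → C → Prop) : ℕ :=
  Set.ncard {p : C × C | P p.1 p.2 ∧ P' p.2 p.1}

/-- `P` is a preference order consistent with the transitive closure of `Q ∪ {(ck, cj)}`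
(for a transitive total order this is the same as extending `Q` and putting `ck` above `cj`). -/
def Feasible {C : Type*} (Q : C → C → Prop) (cj ck : C) (P : C → C → Prop) : Prop :=
  IsPref P ∧ Extends P Q ∧ P ck cj

/-- `P ∈ μ(Pi)`: among all preference orders consistent with the transitive closure of
`Q ∪ {(ck, cj)}`, `P` minimizes the swap distance to `Pi`. -/
def InMu {C : Type*} [Fintype C] (Q : C → C → Prop) (cj ck : C)
    (Pi P : C → C → Prop) : Prop :=
  Feasible Q cj ck P ∧ ∀ R : C → C → Prop, Feasible Q cj ck R → dswap Pi P ≤ dswap Pi R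

namespace Statement11Aux

variable {C : Type*}

lemma prod_ncard {α β : Type*} (s : Set α) (t : Set β) :
    (s ×ˢ t).ncard = s.ncard * t.ncard := by
  rw [← Nat.card_coe_set_eq, ← Nat.card_coe_set_eq, ← Nat.card_coe_set_eq,
    ← Nat.card_prod]
  exact Nat.card_congr (Equiv.Set.prod s t)

lemma pref_asymm {P : C → C → Prop} (h : IsPref P) {a b : C} (hab : P a b) : ¬ P b a :=
  fun hba => h.2.1 a (h.2.2 a b a hab hba)

lemma exists_pi_max [Fintype C] {P : C → C → Prop} (hP : IsPref P) {S : Set C}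
    (hS : S.Nonempty) : ∃ m ∈ S, ∀ x ∈ S, ¬ P x m := by
  obtain ⟨m, hm, hmax⟩ :=
    Set.exists_max_image S (fun x => {y | P x y}.ncard) (Set.toFinite S) hS
  refine ⟨m, hm, fun x hx hPxm => ?_⟩
  have hss : {y | P m y} ⊂ {y | P x y} := by
    constructor
    · exact fun y hy => hP.2.2 x m y hPxm hy
    · intro hsub
      exact hP.2.1 m (hsub hPxm)
  have := Set.ncard_lt_ncard hss (Set.toFinite _)
  have := hmax x hx
  omega

lemma exists_pi_min [Fintype C] {P : C → C → Prop} (hP : IsPref P) {S : Set C}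
    (hS : S.Nonempty) : ∃ m ∈ S, ∀ x ∈ S, ¬ P m x := by
  have hP' : IsPref (fun a b => P b a) :=
    ⟨fun a b hab => (hP.1 b a (Ne.symm hab)), hP.2.1,
      fun a b c hab hbc => hP.2.2 c b a hbc hab⟩
  exact exists_pi_max hP' hS

/-- The block order determined by an upper set `X`: everything in `X` above everything
outside, with `Pi` order inside each block. -/
def blk (Pi : C → C → Prop) (X : Set C) : C → C → Prop :=
  fun a b => (a ∈ X ∧ b ∉ X) ∨ ((a ∈ X ↔ b ∈ X) ∧ Pi a b)

/-- The inversions of the block order w.r.t. `Pi`. -/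
def InvSet (Pi : C → C → Prop) (X : Set C) : Set (C × C) :=
  {p : C × C | p.1 ∉ X ∧ p.2 ∈ X ∧ Pi p.1 p.2}

lemma blk_isPref {Pi : C → C → Prop} (hPi : IsPref Pi) (X : Set C) : IsPref (blk Pi X) := by
  refine ⟨?_, ?_, ?_⟩
  · intro a b hne
    by_cases ha : a ∈ X <;> by_cases hb : b ∈ X
    · rcases hPi.1 a b hne with h | h
      · exact Or.inl (Or.inr ⟨iff_of_true ha hb, h⟩)
      · exact Or.inr (Or.inr ⟨iff_of_true hb ha, h⟩)
    · exact Or.inl (Or.inl ⟨ha, hb⟩)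
    · exact Or.inr (Or.inl ⟨hb, ha⟩)
    · rcases hPi.1 a b hne with h | h
      · exact Or.inl (Or.inr ⟨iff_of_false ha hb, h⟩)
      · exact Or.inr (Or.inr ⟨iff_of_false hb ha, h⟩)
  · rintro a (⟨h1, h2⟩ | ⟨_, h⟩)
    · exact h2 h1
    · exact hPi.2.1 a h
  · rintro a b c (⟨ha, hb⟩ | ⟨hab, h1⟩) (⟨hb', hc⟩ | ⟨hbc, h2⟩)
    · exact (hb hb').elim
    · exact Or.inl ⟨ha, fun hcX => hb (hbc.mpr hcX)⟩
    · exact Or.inl ⟨hab.mpr hb', hc⟩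
    · exact Or.inr ⟨hab.trans hbc, hPi.2.2 a b c h1 h2⟩

lemma blk_feasible {Q Pi : C → C → Prop} (hPi : IsPref Pi) (hPiQ : Extends Pi Q)
    {cj ck : C} {X : Set C} (hup : ∀ a b, Q a b → b ∈ X → a ∈ X)
    (hk : ck ∈ X) (hj : cj ∉ X) : Feasible Q cj ck (blk Pi X) := by
  refine ⟨blk_isPref hPi X, ?_, Or.inl ⟨hk, hj⟩⟩
  intro a b hab
  by_cases hb : b ∈ X
  · have ha : a ∈ X := hup a b hab hb
    exact Or.inr ⟨iff_of_true ha hb, hPiQ a b hab⟩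
  · by_cases ha : a ∈ X
    · exact Or.inl ⟨ha, hb⟩
    · exact Or.inr ⟨iff_of_false ha hb, hPiQ a b hab⟩

lemma dswap_blk [Fintype C] {Pi : C → C → Prop} (hPi : IsPref Pi) (X : Set C) :
    dswap Pi (blk Pi X) = (InvSet Pi X).ncard := by
  unfold dswap
  congr 1
  ext p
  simp only [Set.mem_setOf_eq, blk, InvSet]
  constructor
  · rintro ⟨h12, ⟨h2, h1⟩ | ⟨_, h21⟩⟩
    · exact ⟨h1, h2, h12⟩
    · exact absurd h21 (pref_asymm hPi h12)
  · rintro ⟨h1, h2, h12⟩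
    exact ⟨h12, Or.inl ⟨h2, h1⟩⟩

/-- The core combinatorial lemma: a partition minimizing the inversion count cannot
have `c` in the top block and `d` in the bottom block when `Pi d c`, `d ∉ [cj,Q,-∞]`,
`c ∉ [∞,Q,ck]`. -/
lemma core [Fintype C] {Q Pi : C → C → Prop} (hQ : IsSPO Q) (hPi : IsPref Pi)
    (hPiQ : Extends Pi Q) {cj ck : C}
    {X0 : Set C} (hup : ∀ a b, Q a b → b ∈ X0 → a ∈ X0) (hk : ck ∈ X0) (hj : cj ∉ X0)
    (hmin : ∀ X : Set C, (∀ a b, Q a b → b ∈ X → a ∈ X) → ck ∈ X → cj ∉ X →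
      (InvSet Pi X0).ncard ≤ (InvSet Pi X).ncard)
    {c d : C} (hc : c ∈ X0) (hcK : c ≠ ck) (hcU : ¬ Q c ck)
    (hd : d ∉ X0) (hdj : d ≠ cj) (hdD : ¬ Q cj d) (hdc : Pi d c) : False := by
  have trPi : ∀ a b c : C, Pi a b → Pi b c → Pi a c := hPi.2.2
  set Dset : Set C := {e : C | e = cj ∨ Q cj e} with hDdef
  set Uset : Set C := {u : C | u = ck ∨ Q u ck} with hUdef
  have hDX : ∀ e ∈ Dset, e ∉ X0 := by
    rintro e (rfl | h) he
    · exact hj he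
    · exact hj (hup cj e h he)
  have hUX : ∀ u ∈ Uset, u ∈ X0 := by
    rintro u (rfl | h)
    · exact hk
    · exact hup u ck h hk
  set V : Set C := {v : C | v ∉ X0 ∧ v ∉ Dset ∧ ∃ c', c' ∈ X0 ∧ c' ∉ Uset ∧ Pi v c'}
    with hVdef
  have hdV : d ∈ V := by
    refine ⟨hd, ?_, c, hc, ?_, hdc⟩
    · rintro (rfl | h)
      · exact hdj rfl
      · exact hdD h
    · rintro (rfl | h)
      · exact hcK rfl
      · exact hcU h
  obtain ⟨dm, hdmV, hdmax⟩ := exists_pi_max hPi ⟨d, hdV⟩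
  obtain ⟨hdmX, hdmD, c0, hc0X, hc0U, hc0Pi⟩ := hdmV
  set Cset : Set C := {c' : C | c' ∈ X0 ∧ c' ∉ Uset ∧ Pi dm c'} with hCdef
  have hc0C : c0 ∈ Cset := ⟨hc0X, hc0U, hc0Pi⟩
  obtain ⟨cm, hcmC, hcmin⟩ := exists_pi_min hPi ⟨c0, hc0C⟩
  obtain ⟨hcmX, hcmU, hdmcm⟩ := hcmC
  set S0 : Set C := {w : C | w = dm ∨ (Q w dm ∧ w ∉ X0)} with hS0def
  set T0 : Set C := {w : C | w = cm ∨ (Q cm w ∧ w ∈ X0)} with hT0def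
  have hS0X : ∀ s ∈ S0, s ∉ X0 := by rintro s (rfl | ⟨_, h⟩) <;> [exact hdmX; exact h]
  have hT0X : ∀ t ∈ T0, t ∈ X0 := by rintro t (rfl | ⟨_, h⟩) <;> [exact hcmX; exact h]
  have hS0dm : ∀ s ∈ S0, ∀ z, Pi dm z → Pi s z := by
    rintro s (rfl | ⟨h, _⟩) z hz
    · exact hz
    · exact trPi s dm z (hPiQ s dm h) hz
  have hT0cm : ∀ t ∈ T0, ∀ z, Pi z cm → Pi z t := by
    rintro t (rfl | ⟨h, _⟩) z hz
    · exact hz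
    · exact trPi z cm t hz (hPiQ cm t h)
  have hST : ∀ s ∈ S0, ∀ t ∈ T0, Pi s t :=
    fun s hs t ht => hS0dm s hs t (hT0cm t ht dm hdmcm)
  have hS0D : ∀ s ∈ S0, s ∉ Dset := by
    rintro s (rfl | ⟨hQs, _⟩) hsD
    · exact hdmD hsD
    · rcases hsD with rfl | h
      · exact hdmD (Or.inr hQs)
      · exact hdmD (Or.inr (hQ.2 cj s dm h hQs))
  have hT0U : ∀ t ∈ T0, t ∉ Uset := by
    rintro t (rfl | ⟨hQt, _⟩) htU
    · exact hcmU htU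
    · rcases htU with rfl | h
      · exact hcmU (Or.inr hQt)
      · exact hcmU (Or.inr (hQ.2 cm t ck hQt h))
  set KD : Set C := {v : C | v ∈ Dset ∧ Pi v dm} with hKDdef
  set MU : Set C := {u : C | u ∈ Uset ∧ Pi cm u} with hMUdef
  -- validity of the two modified partitions
  have hupY : ∀ a b, Q a b → b ∈ X0 ∪ S0 → a ∈ X0 ∪ S0 := by
    rintro a b hab (hb | hb)
    · exact Or.inl (hup a b hab hb)
    · by_cases ha : a ∈ X0
      · exact Or.inl ha
      · rcases hb with rfl | ⟨hQb, _⟩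
        · exact Or.inr (Or.inr ⟨hab, ha⟩)
        · exact Or.inr (Or.inr ⟨hQ.2 a b dm hab hQb, ha⟩)
  have hkY : ck ∈ X0 ∪ S0 := Or.inl hk
  have hjY : cj ∉ X0 ∪ S0 := by
    rintro (h | h)
    · exact hj h
    · exact hS0D cj h (Or.inl rfl)
  have hupZ : ∀ a b, Q a b → b ∈ X0 \ T0 → a ∈ X0 \ T0 := by
    rintro a b hab ⟨hbX, hbT⟩
    refine ⟨hup a b hab hbX, fun haT => hbT ?_⟩
    rcases haT with rfl | ⟨hQa, _⟩
    · exact Or.inr ⟨hab, hbX⟩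
    · exact Or.inr ⟨hQ.2 cm a b hQa hab, hbX⟩
  have hkZ : ck ∈ X0 \ T0 := ⟨hk, fun h => hT0U ck h (Or.inl rfl)⟩
  have hjZ : cj ∉ X0 \ T0 := fun h => hj h.1
  -- the change sets
  set Aset : Set (C × C) :=
    {p : C × C | (p.1 ∉ X0 ∧ p.1 ∉ S0) ∧ p.2 ∈ S0 ∧ Pi p.1 p.2} with hAdef
  set Rset : Set (C × C) :=
    {p : C × C | p.1 ∈ S0 ∧ p.2 ∈ X0 ∧ Pi p.1 p.2} with hRdef
  set Bset : Set (C × C) :=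
    {p : C × C | (p.1 ∉ X0 ∧ p.1 ∉ S0) ∧ p.2 ∈ X0 ∧ Pi p.1 p.2} with hBdef
  set A'set : Set (C × C) :=
    {p : C × C | p.1 ∈ T0 ∧ (p.2 ∈ X0 ∧ p.2 ∉ T0) ∧ Pi p.1 p.2} with hA'def
  set R'set : Set (C × C) :=
    {p : C × C | p.1 ∉ X0 ∧ p.2 ∈ T0 ∧ Pi p.1 p.2} with hR'def
  set B'set : Set (C × C) :=
    {p : C × C | p.1 ∉ X0 ∧ (p.2 ∈ X0 ∧ p.2 ∉ T0) ∧ Pi p.1 p.2} with hB'def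
  -- decompositions
  have e1 : InvSet Pi X0 = Bset ∪ Rset := by
    ext ⟨a, b⟩
    constructor
    · rintro ⟨h1, h2, h12⟩
      by_cases hs : a ∈ S0
      · exact Or.inr ⟨hs, h2, h12⟩
      · exact Or.inl ⟨⟨h1, hs⟩, h2, h12⟩
    · rintro (⟨⟨h1, _⟩, h2, h12⟩ | ⟨hs, h2, h12⟩)
      · exact ⟨h1, h2, h12⟩
      · exact ⟨hS0X a hs, h2, h12⟩
  have e2 : InvSet Pi (X0 ∪ S0) = Bset ∪ Aset := by
    ext ⟨a, b⟩
    constructor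
    · rintro ⟨h1, h2, h12⟩
      have h1' : a ∉ X0 ∧ a ∉ S0 := ⟨fun h => h1 (Or.inl h), fun h => h1 (Or.inr h)⟩
      rcases h2 with h2 | h2
      · exact Or.inl ⟨h1', h2, h12⟩
      · exact Or.inr ⟨h1', h2, h12⟩
    · rintro (⟨⟨h1, h1'⟩, h2, h12⟩ | ⟨⟨h1, h1'⟩, h2, h12⟩)
      · exact ⟨fun h => h.elim h1 h1', Or.inl h2, h12⟩
      · exact ⟨fun h => h.elim h1 h1', Or.inr h2, h12⟩
  have e3 : InvSet Pi X0 = B'set ∪ R'set := by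
    ext ⟨a, b⟩
    constructor
    · rintro ⟨h1, h2, h12⟩
      by_cases ht : b ∈ T0
      · exact Or.inr ⟨h1, ht, h12⟩
      · exact Or.inl ⟨h1, ⟨h2, ht⟩, h12⟩
    · rintro (⟨h1, ⟨h2, _⟩, h12⟩ | ⟨h1, h2, h12⟩)
      · exact ⟨h1, h2, h12⟩
      · exact ⟨h1, hT0X b h2, h12⟩
  have e4 : InvSet Pi (X0 \ T0) = B'set ∪ A'set := by
    ext ⟨a, b⟩
    constructor
    · rintro ⟨h1, h2, h12⟩
      by_cases haX : a ∈ X0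
      · have haT : a ∈ T0 := by
          by_contra haT
          exact h1 ⟨haX, haT⟩
        exact Or.inr ⟨haT, h2, h12⟩
      · exact Or.inl ⟨haX, h2, h12⟩
    · rintro (⟨h1, h2, h12⟩ | ⟨h1, h2, h12⟩)
      · exact ⟨fun h => h1 h.1, h2, h12⟩
      · exact ⟨fun h => h.2 h1, h2, h12⟩
  -- disjointness
  have dBR : Disjoint Bset Rset :=
    Set.disjoint_left.mpr (by rintro ⟨a, b⟩ ⟨⟨_, h⟩, _, _⟩ ⟨hs, _, _⟩; exact h hs)
  have dBA : Disjoint Bset Aset :=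
    Set.disjoint_left.mpr
      (by rintro ⟨a, b⟩ ⟨_, h2, _⟩ ⟨_, hs, _⟩; exact hS0X b hs h2)
  have dB'R' : Disjoint B'set R'set :=
    Set.disjoint_left.mpr (by rintro ⟨a, b⟩ ⟨_, ⟨_, h⟩, _⟩ ⟨_, ht, _⟩; exact h ht)
  have dB'A' : Disjoint B'set A'set :=
    Set.disjoint_left.mpr
      (by rintro ⟨a, b⟩ ⟨h1, _, _⟩ ⟨ht, _, _⟩; exact h1 (hT0X a ht))
  -- the two minimality inequalities
  have hRA : Rset.ncard ≤ Aset.ncard := by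
    have h1 := hmin (X0 ∪ S0) hupY hkY hjY
    rw [e1, e2, Set.ncard_union_eq dBR (Set.toFinite _) (Set.toFinite _),
      Set.ncard_union_eq dBA (Set.toFinite _) (Set.toFinite _)] at h1
    omega
  have hR'A' : R'set.ncard ≤ A'set.ncard := by
    have h1 := hmin (X0 \ T0) hupZ hkZ hjZ
    rw [e3, e4, Set.ncard_union_eq dB'R' (Set.toFinite _) (Set.toFinite _),
      Set.ncard_union_eq dB'A' (Set.toFinite _) (Set.toFinite _)] at h1
    omega
  -- bounding the change sets, using extremality of dm and cm
  have iA : Aset ⊆ KD ×ˢ S0 := by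
    rintro ⟨a, b⟩ ⟨⟨haX, haS⟩, hbS, hab⟩
    have hadm : Pi a dm := by
      rcases hbS with rfl | ⟨hQb, _⟩
      · exact hab
      · exact trPi a b dm hab (hPiQ b dm hQb)
    have haD : a ∈ Dset := by
      by_contra h
      exact hdmax a ⟨haX, h, cm, hcmX, hcmU, trPi a dm cm hadm hdmcm⟩ hadm
    exact ⟨⟨haD, hadm⟩, hbS⟩
  have iA' : A'set ⊆ T0 ×ˢ MU := by
    rintro ⟨a, b⟩ ⟨haT, ⟨hbX, hbT⟩, hab⟩
    have hcmb : Pi cm b := by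
      rcases haT with rfl | ⟨hQa, _⟩
      · exact hab
      · exact trPi cm a b (hPiQ cm a hQa) hab
    have hbU : b ∈ Uset := by
      by_contra h
      exact hcmin b ⟨hbX, h, trPi dm cm b hdmcm hcmb⟩ hcmb
    exact ⟨haT, hbU, hcmb⟩
  have iR : (S0 ×ˢ MU) ∪ (S0 ×ˢ T0) ⊆ Rset := by
    rintro ⟨a, b⟩ (⟨haS, hbU, hcmb⟩ | ⟨haS, hbT⟩)
    · exact ⟨haS, hUX b hbU, hS0dm a haS b (trPi dm cm b hdmcm hcmb)⟩
    · exact ⟨haS, hT0X b hbT, hST a haS b hbT⟩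
  have iR' : (KD ×ˢ T0) ∪ (S0 ×ˢ T0) ⊆ R'set := by
    rintro ⟨a, b⟩ (⟨⟨haD, hadm⟩, hbT⟩ | ⟨haS, hbT⟩)
    · exact ⟨hDX a haD, hbT, trPi a dm b hadm (hT0cm b hbT dm hdmcm)⟩
    · exact ⟨hS0X a haS, hbT, hST a haS b hbT⟩
  have dRu : Disjoint (S0 ×ˢ MU) (S0 ×ˢ T0) :=
    Set.disjoint_left.mpr
      (by rintro ⟨a, b⟩ ⟨_, hbU, _⟩ ⟨_, hbT⟩; exact hT0U b hbT hbU)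
  have dR'u : Disjoint (KD ×ˢ T0) (S0 ×ˢ T0) :=
    Set.disjoint_left.mpr
      (by rintro ⟨a, b⟩ ⟨⟨haD, _⟩, _⟩ ⟨haS, _⟩; exact hS0D a haS haD)
  -- cardinal arithmetic
  set p := S0.ncard with hpdef
  set q := T0.ncard with hqdef
  set kd := KD.ncard with hkddef
  set mu := MU.ncard with hmudef
  have hA : Aset.ncard ≤ kd * p := by
    have := Set.ncard_le_ncard iA (Set.toFinite _)
    rwa [prod_ncard] at this
  have hA' : A'set.ncard ≤ q * mu := by
    have := Set.ncard_le_ncard iA' (Set.toFinite _)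
    rwa [prod_ncard] at this
  have hR : p * mu + p * q ≤ Rset.ncard := by
    have h := Set.ncard_le_ncard iR (Set.toFinite _)
    rwa [Set.ncard_union_eq dRu (Set.toFinite _) (Set.toFinite _), prod_ncard, prod_ncard] at h
  have hR' : kd * q + p * q ≤ R'set.ncard := by
    have h := Set.ncard_le_ncard iR' (Set.toFinite _)
    rwa [Set.ncard_union_eq dR'u (Set.toFinite _) (Set.toFinite _), prod_ncard, prod_ncard] at h
  have hp : 0 < p := (Set.ncard_pos (Set.toFinite _)).mpr ⟨dm, Or.inl rfl⟩
  have hq : 0 < q := (Set.ncard_pos (Set.toFinite _)).mpr ⟨cm, Or.inl rfl⟩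
  have key1 : mu + q ≤ kd := by
    have h : p * (mu + q) ≤ p * kd := by
      rw [Nat.mul_add]
      calc p * mu + p * q ≤ Rset.ncard := hR
        _ ≤ Aset.ncard := hRA
        _ ≤ kd * p := hA
        _ = p * kd := Nat.mul_comm kd p
    exact Nat.le_of_mul_le_mul_left h hp
  have key2 : kd + p ≤ mu := by
    have h : q * (kd + p) ≤ q * mu := by
      rw [Nat.mul_add]
      calc q * kd + q * p = kd * q + p * q := by ring
        _ ≤ R'set.ncard := hR'
        _ ≤ A'set.ncard := hR'A'
        _ ≤ q * mu := hA'
    exact Nat.le_of_mul_le_mul_left h hq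
  omega

end Statement11Aux

open Statement11Aux in
theorem statement11 {C : Type*} [Fintype C]
    (Q : C → C → Prop) (hQ : IsSPO Q)
    (Pi : C → C → Prop) (hPi : IsPref Pi) (hPiQ : Extends Pi Q)
    (cj ck : C) (hjk : Pi cj ck) (hQjk : ¬ Q cj ck) (hQkj : ¬ Q ck cj)
    (P' : C → C → Prop) (hmu : InMu Q cj ck Pi P') :
    (∀ c : C, P' c ck → ¬ Q c ck →
        {d : C | d = c ∨ P' d c} =
          {d : C | d = c ∨ Pi d c} \ {d : C | d = cj ∨ Q cj d}) ∧
      ∀ c : C, P' cj c → ¬ Q cj c →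
        {d : C | d = c ∨ P' c d} =
          {d : C | d = c ∨ Pi c d} \ {d : C | d = ck ∨ Q d ck} := by
  obtain ⟨⟨hP', hP'Q, hkj⟩, hopt⟩ := hmu
  have trP' : ∀ a b c : C, P' a b → P' b c → P' a c := hP'.2.2
  have asymP' : ∀ {a b : C}, P' a b → ¬ P' b a := fun h => pref_asymm hP' h
  have asymPi : ∀ {a b : C}, Pi a b → ¬ Pi b a := fun h => pref_asymm hPi h
  set X0 : Set C := {z : C | P' z cj} with hX0def
  have hup : ∀ a b, Q a b → b ∈ X0 → a ∈ X0 :=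
    fun a b hab hb => trP' a b cj (hP'Q a b hab) hb
  have hk : ck ∈ X0 := hkj
  have hj : cj ∉ X0 := hP'.2.1 cj
  -- the inversion set of P' is exactly the inversion set of the partition X0
  have hsub : InvSet Pi X0 ⊆ {p : C × C | Pi p.1 p.2 ∧ P' p.2 p.1} := by
    rintro ⟨a, b⟩ ⟨ha, hb, hab⟩
    refine ⟨hab, ?_⟩
    by_cases hacj : a = cj
    · exact hacj ▸ hb
    · rcases hP'.1 a cj hacj with h | h
      · exact absurd h ha
      · exact trP' b cj a hb h
  have hd1 : dswap Pi P' = ({p : C × C | Pi p.1 p.2 ∧ P' p.2 p.1}).ncard := rfl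
  have hle : ({p : C × C | Pi p.1 p.2 ∧ P' p.2 p.1}).ncard ≤ (InvSet Pi X0).ncard := by
    rw [← hd1, ← dswap_blk hPi X0]
    exact hopt _ (blk_feasible hPi hPiQ hup hk hj)
  have setEq : InvSet Pi X0 = {p : C × C | Pi p.1 p.2 ∧ P' p.2 p.1} :=
    Set.eq_of_subset_of_ncard_le hsub hle (Set.toFinite _)
  have S1 : ∀ a b : C, P' a b → Pi b a → a ∈ X0 ∧ b ∉ X0 := by
    intro a b hab hba
    have hmem : (b, a) ∈ {p : C × C | Pi p.1 p.2 ∧ P' p.2 p.1} := ⟨hba, hab⟩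
    rw [← setEq] at hmem
    exact ⟨hmem.2.1, hmem.1⟩
  have hmin : ∀ X : Set C, (∀ a b, Q a b → b ∈ X → a ∈ X) → ck ∈ X → cj ∉ X →
      (InvSet Pi X0).ncard ≤ (InvSet Pi X).ncard := by
    intro X hupX hkX hjX
    calc (InvSet Pi X0).ncard = dswap Pi P' := by rw [setEq, hd1]
      _ ≤ dswap Pi (blk Pi X) := hopt _ (blk_feasible hPi hPiQ hupX hkX hjX)
      _ = (InvSet Pi X).ncard := dswap_blk hPi X
  constructor
  · -- part 1
    intro c hcck hQcck
    have hccj : P' c cj := trP' c ck cj hcck hkj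
    have hcX : c ∈ X0 := hccj
    have hcnj : c ≠ cj := fun h => hP'.2.1 cj (h ▸ hccj)
    have hcnQ : ¬ Q cj c := fun h => asymP' hccj (hP'Q cj c h)
    ext d
    simp only [Set.mem_setOf_eq, Set.mem_diff]
    constructor
    · rintro (rfl | hdc)
      · exact ⟨Or.inl rfl, by rintro (rfl | h); exacts [hcnj rfl, hcnQ h]⟩
      · have hdnD : ¬ (d = cj ∨ Q cj d) := by
          rintro (h | h)
          · exact asymP' (h ▸ hdc) hccj
          · exact asymP' (trP' d c cj hdc hccj) (hP'Q cj d h)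
        by_cases hdeq : d = c
        · exact ⟨Or.inl hdeq, hdnD⟩
        · rcases hPi.1 d c hdeq with h | h
          · exact ⟨Or.inr h, hdnD⟩
          · exact absurd hcX (S1 d c hdc h).2
    · rintro ⟨rfl | hdc, hdD⟩
      · exact Or.inl rfl
      · by_cases hdeq : d = c
        · exact Or.inl hdeq
        · refine Or.inr ?_
          by_contra hndc
          have hcd : P' c d := (hP'.1 d c hdeq).resolve_left hndc
          have hdX : d ∉ X0 := (S1 c d hcd hdc).2
          exact core hQ hPi hPiQ hup hk hj hmin hcX
            (fun h => hP'.2.1 ck (h ▸ hcck)) hQcck hdX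
            (fun h => hdD (Or.inl h)) (fun h => hdD (Or.inr h)) hdc
  · -- part 2
    intro c hcjc hQcjc
    have hcnX : c ∉ X0 := fun h => asymP' h hcjc
    have hcnk : c ≠ ck := fun h => asymP' hkj (h ▸ hcjc)
    have hcnQk : ¬ Q c ck := fun h => asymP' hkj (trP' cj c ck hcjc (hP'Q c ck h))
    ext d
    simp only [Set.mem_setOf_eq, Set.mem_diff]
    constructor
    · rintro (rfl | hcd)
      · exact ⟨Or.inl rfl, by rintro (rfl | h); exacts [hcnk rfl, hcnQk h]⟩
      · have hdnU : ¬ (d = ck ∨ Q d ck) := by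
          rintro (h | h)
          · exact asymP' hkj (trP' cj c ck hcjc (h ▸ hcd))
          · exact asymP' hkj (trP' cj c ck hcjc (trP' c d ck hcd (hP'Q d ck h)))
        by_cases hdeq : d = c
        · exact ⟨Or.inl hdeq, hdnU⟩
        · rcases hPi.1 c d (fun h => hdeq h.symm) with h | h
          · exact ⟨Or.inr h, hdnU⟩
          · exact absurd hcnX (fun _ => hcnX (S1 c d hcd h).1)
    · rintro ⟨rfl | hcd, hdU⟩
      · exact Or.inl rfl
      · by_cases hdeq : d = c
        · exact Or.inl hdeq
        · refine Or.inr ?_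
          by_contra hncd
          have hdc : P' d c := (hP'.1 c d (fun h => hdeq h.symm)).resolve_left hncd
          have hdX : d ∈ X0 := (S1 d c hdc hcd).1
          exact core hQ hPi hPiQ hup hk hj hmin hdX
            (fun h => hdU (Or.inl h)) (fun h => hdU (Or.inr h)) hcnX
            (fun h => hP'.2.1 cj (h ▸ hcjc)) hQcjc hcd
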